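/- arXiv:1309.6385 — 2 statements merged into one kernel-verified Lean document; each statement's English description precedes it below -/
import Mathlib

section
/- Let (A,H,▶,ρ) be a linked pair of bialgebras where A and H are *-Hopf algebras, and let γ: H → A be γ(x) = ε(x)1. Then the condition ∑γ(x₂*)(x₃*▶(x₁▶a)*) = a*γ(x*) (for all a ∈ A, x ∈ H) is equivalent to the condition (x▶a)* = S⁻¹(x*)▶a* (for all a ∈ A, x ∈ H). -/
open scoped TensorProduct
open Coalgebra

noncomputable section

/-- A Sweedler representation of the comultiplication of `x`:
`Δ x = ∑ᵢ x1 i ⊗ x2 i`. -/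
def Rep2 {H : Type} [AddCommGroup H] [Module ℂ H] [Coalgebra ℂ H]
    {ι : Type} (x : H) (s : Finset ι) (x1 x2 : ι → H) : Prop :=
  Coalgebra.comul (R := ℂ) x = ∑ i ∈ s, x1 i ⊗ₜ[ℂ] x2 i

/-- A representation of an element of a tensor product as a finite sum of pure tensors. -/
def TRep {M N : Type} [AddCommGroup M] [Module ℂ M] [AddCommGroup N] [Module ℂ N]
    {ι : Type} (w : M ⊗[ℂ] N) (s : Finset ι) (p : ι → M) (q : ι → N) : Prop :=
  w = ∑ i ∈ s, p i ⊗ₜ[ℂ] q i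

/-- The iterated comultiplication `x ↦ ∑ (x₁ ⊗ x₂) ⊗ x₃`. -/
def comul3 (H : Type) [AddCommGroup H] [Module ℂ H] [Coalgebra ℂ H] :
    H →ₗ[ℂ] (H ⊗[ℂ] H) ⊗[ℂ] H :=
  (LinearMap.rTensor H (Coalgebra.comul (R := ℂ))) ∘ₗ Coalgebra.comul (R := ℂ)

/-- The iterated comultiplication with four output legs. -/
def comul4 (H : Type) [AddCommGroup H] [Module ℂ H] [Coalgebra ℂ H] :
    H →ₗ[ℂ] ((H ⊗[ℂ] H) ⊗[ℂ] H) ⊗[ℂ] H :=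
  (LinearMap.rTensor H (comul3 H)) ∘ₗ Coalgebra.comul (R := ℂ)

/-- The iterated comultiplication with five output legs. -/
def comul5 (H : Type) [AddCommGroup H] [Module ℂ H] [Coalgebra ℂ H] :
    H →ₗ[ℂ] (((H ⊗[ℂ] H) ⊗[ℂ] H) ⊗[ℂ] H) ⊗[ℂ] H :=
  (LinearMap.rTensor H (comul4 H)) ∘ₗ Coalgebra.comul (R := ℂ)

/-- The iterated comultiplication with six output legs. -/
def comul6 (H : Type) [AddCommGroup H] [Module ℂ H] [Coalgebra ℂ H] :
    H →ₗ[ℂ] ((((H ⊗[ℂ] H) ⊗[ℂ] H) ⊗[ℂ] H) ⊗[ℂ] H) ⊗[ℂ] H :=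
  (LinearMap.rTensor H (comul5 H)) ∘ₗ Coalgebra.comul (R := ℂ)

/-- A `*`-structure on a Hopf algebra over `ℂ`: a conjugate-linear involution which is
antimultiplicative and comultiplicative.  Together with the Hopf algebra this is the data of
a `*`-Hopf algebra. -/
structure StarHopf (H : Type) [Ring H] [HopfAlgebra ℂ H] : Type where
  st : H → H
  st_add : ∀ x y : H, st (x + y) = st x + st y
  st_smul : ∀ (c : ℂ) (x : H), st (c • x) = (starRingEnd ℂ) c • st x
  st_invol : ∀ x : H, st (st x) = x
  st_antimul : ∀ x y : H, st (x * y) = st y * st x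
  st_comul : ∀ (x : H) {ι : Type} (s : Finset ι) (x1 x2 : ι → H),
      Rep2 x s x1 x2 →
      Coalgebra.comul (R := ℂ) (st x) = ∑ i ∈ s, st (x1 i) ⊗ₜ[ℂ] st (x2 i)

/-- A right comodule over a Hopf algebra. -/
structure RightComodule (H : Type) [Ring H] [HopfAlgebra ℂ H]
    (V : Type) [AddCommGroup V] [Module ℂ V] : Type where
  ρ : V →ₗ[ℂ] V ⊗[ℂ] H
  counit_cond : ∀ v : V, (TensorProduct.rid ℂ V)
      ((LinearMap.lTensor V (Coalgebra.counit (R := ℂ))) (ρ v)) = v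
  coassoc_cond : ∀ v : V, (LinearMap.rTensor H ρ) (ρ v)
      = (TensorProduct.assoc ℂ V H H).symm
          ((LinearMap.lTensor V (Coalgebra.comul (R := ℂ))) (ρ v))

/-- An inner product: sesquilinear (linear in the first variable), conjugate-symmetric and
positive definite. -/
structure IsInner {V : Type} [AddCommGroup V] [Module ℂ V] (ip : V → V → ℂ) : Prop where
  add_left : ∀ u u' v : V, ip (u + u') v = ip u v + ip u' v
  smul_left : ∀ (c : ℂ) (u v : V), ip (c • u) v = c * ip u v
  conj_symm : ∀ u v : V, ip v u = (starRingEnd ℂ) (ip u v)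
  pos_def : ∀ v : V, v ≠ 0 → 0 < (ip v v).re

/-- The invariance condition `∑ ⟨u₀,v⟩ S(u₁) = ∑ ⟨u,v₀⟩ v₁*` for a sesquilinear form on a
right comodule. -/
def RInvariant {H : Type} [Ring H] [HopfAlgebra ℂ H] (σ : StarHopf H)
    {V : Type} [AddCommGroup V] [Module ℂ V] (c : RightComodule H V)
    (ip : V → V → ℂ) : Prop :=
  ∀ (u v : V) {ι κ : Type} (s : Finset ι) (t : Finset κ)
    (u0 : ι → V) (u1 : ι → H) (v0 : κ → V) (v1 : κ → H),
    TRep (c.ρ u) s u0 u1 → TRep (c.ρ v) t v0 v1 →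
    ∑ i ∈ s, ip (u0 i) v • (HopfAlgebra.antipode (R := ℂ) (u1 i))
      = ∑ j ∈ t, ip u (v0 j) • σ.st (v1 j)

/-- A compact quantum group: a `*`-Hopf algebra such that every right comodule admits an
invariant inner product. -/
def IsCQG (H : Type) [Ring H] [HopfAlgebra ℂ H] (σ : StarHopf H) : Prop :=
  ∀ (V : Type) [AddCommGroup V] [Module ℂ V] (c : RightComodule H V),
    ∃ ip : V → V → ℂ, IsInner ip ∧ RInvariant σ c ip

/-- `φ` is a normal integral on the Hopf algebra `H` (a two-sided integral with `φ(1) = 1`);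
a Hopf algebra is cosemisimple iff it admits a normal integral. -/
def IsNormalIntegral (H : Type) [Ring H] [HopfAlgebra ℂ H] (φ : H →ₗ[ℂ] ℂ) : Prop :=
  φ 1 = 1 ∧
  (∀ (x : H) {ι : Type} (s : Finset ι) (x1 x2 : ι → H), Rep2 x s x1 x2 →
      ∑ i ∈ s, φ (x1 i) • x2 i = φ x • (1 : H)) ∧
  (∀ (x : H) {ι : Type} (s : Finset ι) (x1 x2 : ι → H), Rep2 x s x1 x2 →
      ∑ i ∈ s, φ (x2 i) • x1 i = φ x • (1 : H))

section LinkedPair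

variable (A H : Type) [Ring A] [HopfAlgebra ℂ A] [Ring H] [HopfAlgebra ℂ H]

/-- A linked pair of bialgebras `(A, H, ▶, ρ)` (a cocycle linked pair with trivial cocycle
and cococycle): `A` is a left `H`-module algebra via `tri x a = x ▶ a`, `H` is a right
`A`-comodule coalgebra via `rho = ρ : H → H ⊗ A`, and the compatibility relations hold. -/
structure IsLinkedPair
    (tri : H →ₗ[ℂ] A →ₗ[ℂ] A) (rho : H →ₗ[ℂ] H ⊗[ℂ] A) : Prop where
  -- `A` is a left `H`-module algebra
  tri_one_act : ∀ a : A, tri 1 a = a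
  tri_mul_act : ∀ (x y : H) (a : A), tri (x * y) a = tri x (tri y a)
  tri_one : ∀ x : H, tri x 1 = Coalgebra.counit (R := ℂ) x • (1 : A)
  tri_mul : ∀ (x : H) (a b : A) {ι : Type} (s : Finset ι) (x1 x2 : ι → H),
      Rep2 x s x1 x2 → tri x (a * b) = ∑ i ∈ s, tri (x1 i) a * tri (x2 i) b
  -- `H` is a right `A`-comodule coalgebra
  rho_counit : ∀ (x : H) {ι : Type} (s : Finset ι) (h : ι → H) (c : ι → A),
      TRep (rho x) s h c →
      ∑ i ∈ s, Coalgebra.counit (R := ℂ) (h i) • c i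
        = Coalgebra.counit (R := ℂ) x • (1 : A)
  rho_comul : ∀ (x : H) {ι : Type} (s : Finset ι) (g k : ι → H) (c d : ι → A),
      (TensorProduct.map rho rho) (Coalgebra.comul (R := ℂ) x)
        = ∑ i ∈ s, (g i ⊗ₜ[ℂ] c i) ⊗ₜ[ℂ] (k i ⊗ₜ[ℂ] d i) →
      (LinearMap.rTensor A (Coalgebra.comul (R := ℂ))) (rho x)
        = ∑ i ∈ s, (g i ⊗ₜ[ℂ] k i) ⊗ₜ[ℂ] (c i * d i)
  rho_id : ∀ (x : H) {ι : Type} (s : Finset ι) (h : ι → H) (c : ι → A),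
      TRep (rho x) s h c → ∑ i ∈ s, Coalgebra.counit (R := ℂ) (c i) • h i = x
  rho_coassoc : ∀ x : H,
      (TensorProduct.assoc ℂ H A A) ((LinearMap.rTensor A rho) (rho x))
        = (LinearMap.lTensor H (Coalgebra.comul (R := ℂ) : A →ₗ[ℂ] A ⊗[ℂ] A)) (rho x)
  -- the compatibility relations
  compat_counit : ∀ (x : H) (a : A), Coalgebra.counit (R := ℂ) (tri x a)
      = Coalgebra.counit (R := ℂ) x * Coalgebra.counit (R := ℂ) a
  compat_one : rho 1 = (1 : H) ⊗ₜ[ℂ] (1 : A)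
  compat_comul : ∀ (x : H) (a : A) {ι κ : Type} (s : Finset ι) (t : Finset κ)
      (a1 a2 : ι → A) (g : κ → H) (c : κ → A) (u : κ → H),
      Rep2 a s a1 a2 →
      (TensorProduct.map rho (LinearMap.id : H →ₗ[ℂ] H)) (Coalgebra.comul (R := ℂ) x)
        = ∑ j ∈ t, (g j ⊗ₜ[ℂ] c j) ⊗ₜ[ℂ] u j →
      Coalgebra.comul (R := ℂ) (tri x a)
        = ∑ j ∈ t, ∑ i ∈ s, tri (g j) (a1 i) ⊗ₜ[ℂ] (c j * tri (u j) (a2 i))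
  compat_rho_mul : ∀ (x y : H) {ι κ : Type} (s : Finset ι) (t : Finset κ)
      (g : ι → H) (c : ι → A) (u : ι → H) (k : κ → H) (d : κ → A),
      (TensorProduct.map rho (LinearMap.id : H →ₗ[ℂ] H)) (Coalgebra.comul (R := ℂ) x)
        = ∑ i ∈ s, (g i ⊗ₜ[ℂ] c i) ⊗ₜ[ℂ] u i →
      TRep (rho y) t k d →
      rho (x * y) = ∑ i ∈ s, ∑ j ∈ t, (g i * k j) ⊗ₜ[ℂ] (c i * tri (u i) (d j))
  compat_sym : ∀ (x : H) (a : A) {ι κ : Type} (s : Finset ι) (t : Finset κ)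
      (x1 : ι → H) (h : ι → H) (b : ι → A)
      (g : κ → H) (c : κ → A) (x2 : κ → H),
      (LinearMap.lTensor H rho) (Coalgebra.comul (R := ℂ) x)
        = ∑ i ∈ s, x1 i ⊗ₜ[ℂ] (h i ⊗ₜ[ℂ] b i) →
      (LinearMap.rTensor H rho) (Coalgebra.comul (R := ℂ) x)
        = ∑ j ∈ t, (g j ⊗ₜ[ℂ] c j) ⊗ₜ[ℂ] x2 j →
      ∑ i ∈ s, h i ⊗ₜ[ℂ] (tri (x1 i) a * b i)
        = ∑ j ∈ t, g j ⊗ₜ[ℂ] (c j * tri (x2 j) a)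

/-- `M`, identified with `A ⊗ H` via `e`, carries the Hopf algebra structure of the bismash
product `A # H` of the linked pair `(A, H, ▶, ρ)`. -/
structure IsBismash
    (tri : H →ₗ[ℂ] A →ₗ[ℂ] A) (rho : H →ₗ[ℂ] H ⊗[ℂ] A)
    (M : Type) [Ring M] [HopfAlgebra ℂ M] (e : A ⊗[ℂ] H ≃ₗ[ℂ] M) : Prop where
  mul_def : ∀ (a b : A) (x y : H) {ι : Type} (s : Finset ι) (x1 x2 : ι → H),
      Rep2 x s x1 x2 →
      e (a ⊗ₜ[ℂ] x) * e (b ⊗ₜ[ℂ] y)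
        = ∑ i ∈ s, e ((a * tri (x1 i) b) ⊗ₜ[ℂ] (x2 i * y))
  one_def : (1 : M) = e ((1 : A) ⊗ₜ[ℂ] (1 : H))
  comul_def : ∀ (a : A) (x : H) {ι κ : Type} (s : Finset ι) (t : Finset κ)
      (a1 a2 : ι → A) (g : κ → H) (c : κ → A) (u : κ → H),
      Rep2 a s a1 a2 →
      (TensorProduct.map rho (LinearMap.id : H →ₗ[ℂ] H)) (Coalgebra.comul (R := ℂ) x)
        = ∑ j ∈ t, (g j ⊗ₜ[ℂ] c j) ⊗ₜ[ℂ] u j →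
      Coalgebra.comul (R := ℂ) (e (a ⊗ₜ[ℂ] x))
        = ∑ i ∈ s, ∑ j ∈ t, e (a1 i ⊗ₜ[ℂ] g j) ⊗ₜ[ℂ] e ((a2 i * c j) ⊗ₜ[ℂ] u j)
  counit_def : ∀ (a : A) (x : H),
      Coalgebra.counit (R := ℂ) (e (a ⊗ₜ[ℂ] x))
        = Coalgebra.counit (R := ℂ) a * Coalgebra.counit (R := ℂ) x

end LinkedPair

/-!
Put `y = x*` and `f y = (y* ▶ a)*`, a ℂ-linear map. The first condition becomes
`∑ y₂ ▶ f y₁ = ε(y) a*` and the second `f y = S⁻¹(y) ▶ a*`. Since `∑ y₂ S⁻¹(y₁) = ε(y) 1`, the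
second implies the first. Conversely, coassociativity and `∑ S⁻¹(y₂) y₁ = ε(y) 1` give
`f y = ∑ S⁻¹(y₂) ▶ (∑ y₁₂ ▶ f y₁₁)` for every linear `f`, and the first condition collapses the
right-hand side to `S⁻¹(y) ▶ a*`.
-/

theorem Coalgebra.sum_counit_right_smul_left {R C : Type*} [CommSemiring R] [AddCommMonoid C]
    [Module R C] [Coalgebra R C] {y : C} {ι : Type*} (r : Repr R y ι) :
    ∑ i ∈ r.index, counit (R := R) (r.right i) • r.left i = y := by
  simpa only [map_sum, _root_.TensorProduct.rid_tmul, one_smul] using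
    congrArg (_root_.TensorProduct.rid R C) (sum_tmul_counit_eq r)

section InverseAntipode

variable {R H : Type*} [CommSemiring R] [Semiring H] [HopfAlgebra R H] (Sinv : H →ₗ[R] H)

theorem invAntipode_one (hS₁ : ∀ x, Sinv (HopfAlgebra.antipode R x) = x) : Sinv 1 = 1 := by
  simpa using hS₁ 1

theorem invAntipode_mul_antidistrib (hS₁ : ∀ x, Sinv (HopfAlgebra.antipode R x) = x)
    (hS₂ : ∀ x, HopfAlgebra.antipode R (Sinv x) = x) (x y : H) :
    Sinv (x * y) = Sinv y * Sinv x := by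
  conv_lhs => rw [← hS₂ x, ← hS₂ y, ← HopfAlgebra.antipode_mul_antidistrib, hS₁]

theorem sum_mul_invAntipode_eq_smul (hS₁ : ∀ x, Sinv (HopfAlgebra.antipode R x) = x)
    (hS₂ : ∀ x, HopfAlgebra.antipode R (Sinv x) = x) {y : H} {ι : Type*} (r : Repr R y ι) :
    ∑ i ∈ r.index, r.right i * Sinv (r.left i) = counit (R := R) y • 1 :=
  calc ∑ i ∈ r.index, r.right i * Sinv (r.left i)
      = Sinv (∑ i ∈ r.index, r.left i * HopfAlgebra.antipode R (r.right i)) := by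
        simp [map_sum, invAntipode_mul_antidistrib Sinv hS₁ hS₂, hS₁]
    _ = counit (R := R) y • 1 := by
        rw [HopfAlgebra.sum_mul_antipode_eq_smul, map_smul, invAntipode_one Sinv hS₁]

theorem sum_invAntipode_mul_eq_smul (hS₁ : ∀ x, Sinv (HopfAlgebra.antipode R x) = x)
    (hS₂ : ∀ x, HopfAlgebra.antipode R (Sinv x) = x) {y : H} {ι : Type*} (r : Repr R y ι) :
    ∑ i ∈ r.index, Sinv (r.right i) * r.left i = counit (R := R) y • 1 :=
  calc ∑ i ∈ r.index, Sinv (r.right i) * r.left i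
      = Sinv (∑ i ∈ r.index, HopfAlgebra.antipode R (r.left i) * r.right i) := by
        simp [map_sum, invAntipode_mul_antidistrib Sinv hS₁ hS₂, hS₁]
    _ = counit (R := R) y • 1 := by
        rw [HopfAlgebra.sum_antipode_mul_eq_smul, map_smul, invAntipode_one Sinv hS₁]

end InverseAntipode

section Representation

universe u

variable {R M : Type*} {H : Type u} [CommSemiring R] [Semiring H] [HopfAlgebra R H]
  [AddCommMonoid M] [Module R M] (ρ : H →ₐ[R] Module.End R M) (Sinv : H →ₗ[R] H)

theorem sum_act_invAntipode_sum_act_eq (hS₁ : ∀ x, Sinv (HopfAlgebra.antipode R x) = x)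
    (hS₂ : ∀ x, HopfAlgebra.antipode R (Sinv x) = x) (f : H →ₗ[R] M) {y : H}
    {ι : Type*} {κ : ι → Type*} (r : Repr R y ι) (r₁ : (i : ι) → Repr R (r.left i) (κ i)) :
    ∑ i ∈ r.index, ρ (Sinv (r.right i))
      (∑ j ∈ (r₁ i).index, ρ ((r₁ i).right j) (f ((r₁ i).left j))) = f y := by
  -- `Ψ (u ⊗ (v ⊗ w)) = ρ (Sinv w * v) (f u)`
  let Ψ : H ⊗[R] (H ⊗[R] H) →ₗ[R] M :=
    TensorProduct.lift ((ρ.toLinearMap ∘ₗ LinearMap.mul' R H ∘ₗ TensorProduct.map Sinv .id ∘ₗ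
      (TensorProduct.comm R H H).toLinearMap).compl₂ f) ∘ₗ
      (TensorProduct.comm R H (H ⊗[R] H)).toLinearMap
  have h := congr(Ψ $(sum_tmul_tmul_eq r r₁ (fun i => ℛ R (r.right i))))
  simp only [Ψ, map_sum, LinearMap.coe_comp, LinearEquiv.coe_coe, Function.comp_apply,
    TensorProduct.comm_tmul, TensorProduct.lift.tmul, LinearMap.compl₂_apply,
    AlgHom.coe_toLinearMap, TensorProduct.map_tmul, LinearMap.id_coe, id_eq,
    LinearMap.mul'_apply] at h
  simp_rw [map_sum, ← Module.End.mul_apply, ← map_mul, h]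
  simp_rw [← LinearMap.sum_apply, ← map_sum, sum_invAntipode_mul_eq_smul Sinv hS₁ hS₂, map_smul,
    map_one, LinearMap.smul_apply, Module.End.one_apply, ← map_smul, ← map_sum,
    Coalgebra.sum_counit_right_smul_left]

theorem sum_act_eq_counit_smul_iff (hS₁ : ∀ x, Sinv (HopfAlgebra.antipode R x) = x)
    (hS₂ : ∀ x, HopfAlgebra.antipode R (Sinv x) = x) (f : H →ₗ[R] M) (m : M) :
    (∀ (y : H) {ι : Type u} (r : Repr R y ι),
        ∑ i ∈ r.index, ρ (r.right i) (f (r.left i)) = counit (R := R) y • m) ↔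
      ∀ y, f y = ρ (Sinv y) m := by
  constructor
  · intro h y
    calc f y = ∑ i ∈ (ℛ R y).index, ρ (Sinv ((ℛ R y).right i))
          (∑ j ∈ (ℛ R ((ℛ R y).left i)).index,
            ρ ((ℛ R ((ℛ R y).left i)).right j) (f ((ℛ R ((ℛ R y).left i)).left j))) :=
          (sum_act_invAntipode_sum_act_eq ρ Sinv hS₁ hS₂ f _ _).symm
      _ = ∑ i ∈ (ℛ R y).index, ρ (Sinv ((ℛ R y).right i))
            (counit (R := R) ((ℛ R y).left i) • m) :=
          Finset.sum_congr rfl fun i _ => by rw [h _ (ℛ R _)]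
      _ = ρ (Sinv y) m := by
          simp_rw [map_smul, ← LinearMap.smul_apply, ← map_smul, ← LinearMap.sum_apply, ← map_sum,
            Coalgebra.sum_counit_smul]
  · intro h y ι r
    simp_rw [h, ← Module.End.mul_apply, ← map_mul, ← LinearMap.sum_apply, ← map_sum,
      sum_mul_invAntipode_eq_smul Sinv hS₁ hS₂, map_smul, map_one, LinearMap.smul_apply,
      Module.End.one_apply]

end Representation

@[simps]
def StarHopf.conjLinearMap {A H : Type} [Ring A] [HopfAlgebra ℂ A] [Ring H] [HopfAlgebra ℂ H]
    (σA : StarHopf A) (σH : StarHopf H) (L : H →ₗ[ℂ] A) : H →ₗ[ℂ] A where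
  toFun y := σA.st (L (σH.st y))
  map_add' x y := by simp only [σH.st_add, map_add, σA.st_add]
  map_smul' c y := by
    simp only [σH.st_smul, map_smul, σA.st_smul, Complex.conj_conj, RingHom.id_apply]

@[simps!]
def IsLinkedPair.actionHom {A H : Type} [Ring A] [HopfAlgebra ℂ A] [Ring H] [HopfAlgebra ℂ H]
    {tri : H →ₗ[ℂ] A →ₗ[ℂ] A} {rho : H →ₗ[ℂ] H ⊗[ℂ] A} (hlp : IsLinkedPair A H tri rho) :
    H →ₐ[ℂ] Module.End ℂ A :=
  AlgHom.ofLinearMap tri (LinearMap.ext hlp.tri_one_act)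
    fun x y => LinearMap.ext (hlp.tri_mul_act x y)

/-- Let `(A, H, ▶, ρ)` be a linked pair of bialgebras where `A` and `H` are
`*`-Hopf algebras, and let `γ(x) = ε(x) 1`.  Then the condition
`∑ γ(x₂*) (x₃* ▶ (x₁ ▶ a)*) = a* γ(x*)`, i.e. `∑ x₂* ▶ (x₁ ▶ a)* = ε(x*) a*`, is
equivalent to the condition `(x ▶ a)* = S⁻¹(x*) ▶ a*`. -/
theorem linked_pair_star_action_iff
    {A H : Type} [Ring A] [HopfAlgebra ℂ A] [Ring H] [HopfAlgebra ℂ H]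
    (tri : H →ₗ[ℂ] A →ₗ[ℂ] A) (rho : H →ₗ[ℂ] H ⊗[ℂ] A)
    (hlp : IsLinkedPair A H tri rho)
    (σA : StarHopf A) (σH : StarHopf H)
    (Sinv : H →ₗ[ℂ] H)
    (hSinv₁ : ∀ x : H, Sinv (HopfAlgebra.antipode (R := ℂ) x) = x)
    (hSinv₂ : ∀ x : H, HopfAlgebra.antipode (R := ℂ) (Sinv x) = x) :
    (∀ (x : H) (a : A) {ι : Type} (s : Finset ι) (x1 x2 : ι → H),
        Rep2 x s x1 x2 →
        ∑ i ∈ s, tri (σH.st (x2 i)) (σA.st (tri (x1 i) a))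
          = Coalgebra.counit (R := ℂ) (σH.st x) • σA.st a)
      ↔ (∀ (x : H) (a : A), σA.st (tri x a) = tri (Sinv (σH.st x)) (σA.st a)) := by
  have key a := sum_act_eq_counit_smul_iff hlp.actionHom Sinv hSinv₁ hSinv₂
    (σA.conjLinearMap σH (tri.flip a)) (σA.st a)
  simp only [StarHopf.conjLinearMap_apply, LinearMap.flip_apply, IsLinkedPair.actionHom_apply]
    at key
  constructor
  · intro h x a
    have hf := (key a).1 fun y _ r => by
      simpa only [σH.st_invol, Function.comp_apply] using
        h (σH.st y) a r.index (σH.st ∘ r.left) (σH.st ∘ r.right)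
          (σH.st_comul y r.index r.left r.right r.eq.symm)
    simpa only [σH.st_invol] using hf (σH.st x)
  · intro h x a ι s x1 x2 hx
    have hf y : σA.st (tri (σH.st y) a) = tri (Sinv y) (σA.st a) := by
      simpa only [σH.st_invol] using h (σH.st y) a
    simpa only [σH.st_invol, Function.comp_apply] using
      (key a).2 hf (σH.st x) ⟨s, σH.st ∘ x1, σH.st ∘ x2, (σH.st_comul x s x1 x2 hx).symm⟩
end
end

section
/- Let (A,H,▶,ρ) be a linked pair of bialgebras where A and H are cosemisimple with normal integrals φ_A and φ_H, and let Φ(a#x) = φ_A(a)φ_H(x) be the corresponding normal integral on A#H. Then Φ is central (Φ((a#x)(b#y)) = Φ((b#y)(a#x)) for all a,b ∈ A, x,y ∈ H) if and only if φ_A and φ_H are central (φ_A(ab) = φ_A(ba) and φ_H(xy) = φ_H(yx)) and φ_A is a morphism of H-modules, i.e. φ_A(x▶a) = ε(x)φ_A(a) for all x ∈ H, a ∈ A. -/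
open scoped TensorProduct
open Coalgebra

noncomputable section

section AuxBismash

variable {H : Type} [Ring H] [HopfAlgebra ℂ H]

lemma rep2_exists (x : H) : ∃ s : Finset (H × H), Rep2 x s Prod.fst Prod.snd :=
  TensorProduct.exists_finset (Coalgebra.comul (R := ℂ) x)

lemma rep2_eq {ι : Type} {x : H} {s : Finset ι} {x1 x2 : ι → H}
    (h : Rep2 x s x1 x2) :
    Coalgebra.comul (R := ℂ) x = ∑ i ∈ s, x1 i ⊗ₜ[ℂ] x2 i := h

lemma sum_counit_smul {ι : Type} {x : H} {s : Finset ι} {x1 x2 : ι → H}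
    (h : Rep2 x s x1 x2) :
    ∑ i ∈ s, Coalgebra.counit (R := ℂ) (x1 i) • x2 i = x := by
  have h2 := Coalgebra.rTensor_counit_comul (R := ℂ) x
  rw [rep2_eq h, map_sum] at h2
  simp only [LinearMap.rTensor_tmul] at h2
  have h3 := congrArg (TensorProduct.lid ℂ H) h2
  simpa using h3

lemma sum_smul_counit {ι : Type} {x : H} {s : Finset ι} {x1 x2 : ι → H}
    (h : Rep2 x s x1 x2) :
    ∑ i ∈ s, Coalgebra.counit (R := ℂ) (x2 i) • x1 i = x := by
  have h2 := Coalgebra.lTensor_counit_comul (R := ℂ) x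
  rw [rep2_eq h, map_sum] at h2
  simp only [LinearMap.lTensor_tmul] at h2
  have h3 := congrArg (TensorProduct.rid ℂ H) h2
  simpa using h3

lemma sum_mul_antipode {ι : Type} {x : H} {s : Finset ι} {x1 x2 : ι → H}
    (h : Rep2 x s x1 x2) :
    ∑ i ∈ s, x1 i * HopfAlgebra.antipode (R := ℂ) (x2 i)
      = Coalgebra.counit (R := ℂ) x • (1 : H) := by
  have h2 := HopfAlgebra.mul_antipode_lTensor_comul_apply (R := ℂ) x
  rw [rep2_eq h, map_sum, map_sum] at h2
  simp only [LinearMap.lTensor_tmul, LinearMap.mul'_apply] at h2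
  rw [h2, Algebra.algebraMap_eq_smul_one]

lemma sum_antipode_mul {ι : Type} {x : H} {s : Finset ι} {x1 x2 : ι → H}
    (h : Rep2 x s x1 x2) :
    ∑ i ∈ s, HopfAlgebra.antipode (R := ℂ) (x1 i) * x2 i
      = Coalgebra.counit (R := ℂ) x • (1 : H) := by
  have h2 := HopfAlgebra.mul_antipode_rTensor_comul_apply (R := ℂ) x
  rw [rep2_eq h, map_sum, map_sum] at h2
  simp only [LinearMap.rTensor_tmul, LinearMap.mul'_apply] at h2
  rw [h2, Algebra.algebraMap_eq_smul_one]

lemma rep2_mul {ι κ : Type} {x y : H} {s : Finset ι} {t : Finset κ}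
    {x1 x2 : ι → H} {y1 y2 : κ → H} (hx : Rep2 x s x1 x2) (hy : Rep2 y t y1 y2) :
    Rep2 (x * y) (s ×ˢ t) (fun p => x1 p.1 * y1 p.2) (fun p => x2 p.1 * y2 p.2) := by
  show Coalgebra.comul (R := ℂ) (x * y) = _
  rw [Bialgebra.comul_mul, rep2_eq hx, rep2_eq hy, Finset.sum_mul_sum,
    Finset.sum_product]
  simp [Algebra.TensorProduct.tmul_mul_tmul]


lemma key_collapse {ι κ : Type} {z : H} {s : Finset ι} {z1 z2 : ι → H}
    (hz : Rep2 z s z1 z2)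
    (t : ι → Finset κ) (p q : ι → κ → H)
    (hp : ∀ i ∈ s, Rep2 (z1 i) (t i) (p i) (q i)) :
    ∑ i ∈ s, ∑ j ∈ t i, p i j ⊗ₜ[ℂ] (q i j * HopfAlgebra.antipode (R := ℂ) (z2 i))
      = z ⊗ₜ[ℂ] (1 : H) := by
  set f : H ⊗[ℂ] H →ₗ[ℂ] H :=
    LinearMap.mul' ℂ H ∘ₗ LinearMap.lTensor H (HopfAlgebra.antipode (R := ℂ)) with hf
  set K : (H ⊗[ℂ] H) ⊗[ℂ] H →ₗ[ℂ] H ⊗[ℂ] H :=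
    LinearMap.lTensor H f ∘ₗ (TensorProduct.assoc ℂ H H H).toLinearMap with hK
  have h1 : (Coalgebra.comul (R := ℂ) : H →ₗ[ℂ] H ⊗[ℂ] H).rTensor H
        (Coalgebra.comul (R := ℂ) z)
      = ∑ i ∈ s, ∑ j ∈ t i, (p i j ⊗ₜ[ℂ] q i j) ⊗ₜ[ℂ] z2 i := by
    rw [rep2_eq hz, map_sum]
    refine Finset.sum_congr rfl fun i hi => ?_
    rw [LinearMap.rTensor_tmul, rep2_eq (hp i hi), TensorProduct.sum_tmul]
  have h2 := congrArg K h1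
  have h3 : K (∑ i ∈ s, ∑ j ∈ t i, (p i j ⊗ₜ[ℂ] q i j) ⊗ₜ[ℂ] z2 i)
      = ∑ i ∈ s, ∑ j ∈ t i, p i j ⊗ₜ[ℂ] (q i j * HopfAlgebra.antipode (R := ℂ) (z2 i)) := by
    rw [map_sum]
    refine Finset.sum_congr rfl fun i _ => ?_
    rw [map_sum]
    refine Finset.sum_congr rfl fun j _ => ?_
    simp [hK, hf, TensorProduct.assoc_tmul]
  have h4 : K ((Coalgebra.comul (R := ℂ) : H →ₗ[ℂ] H ⊗[ℂ] H).rTensor H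
        (Coalgebra.comul (R := ℂ) z)) = z ⊗ₜ[ℂ] (1 : H) := by
    have hKc : K ((Coalgebra.comul (R := ℂ) : H →ₗ[ℂ] H ⊗[ℂ] H).rTensor H
          (Coalgebra.comul (R := ℂ) z))
        = LinearMap.lTensor H f
            ((Coalgebra.comul (R := ℂ) : H →ₗ[ℂ] H ⊗[ℂ] H).lTensor H
              (Coalgebra.comul (R := ℂ) z)) := by
      simp only [hK, LinearMap.comp_apply, LinearEquiv.coe_coe]
      rw [Coalgebra.coassoc_apply]
    rw [hKc, rep2_eq hz, map_sum, map_sum]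
    have h5 : ∀ i ∈ s, LinearMap.lTensor H f
          ((Coalgebra.comul (R := ℂ) : H →ₗ[ℂ] H ⊗[ℂ] H).lTensor H (z1 i ⊗ₜ[ℂ] z2 i))
        = (Coalgebra.counit (R := ℂ) (z2 i)) • (z1 i ⊗ₜ[ℂ] (1 : H)) := by
      intro i _
      rw [LinearMap.lTensor_tmul, LinearMap.lTensor_tmul]
      have h6 : f (Coalgebra.comul (R := ℂ) (z2 i))
          = Coalgebra.counit (R := ℂ) (z2 i) • (1 : H) := by
        simp only [hf, LinearMap.comp_apply]
        rw [HopfAlgebra.mul_antipode_lTensor_comul_apply, Algebra.algebraMap_eq_smul_one]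
      rw [h6, TensorProduct.tmul_smul]
    rw [Finset.sum_congr rfl h5]
    have h7 : ∑ i ∈ s, (Coalgebra.counit (R := ℂ) (z2 i)) • (z1 i ⊗ₜ[ℂ] (1 : H))
        = (∑ i ∈ s, (Coalgebra.counit (R := ℂ) (z2 i)) • z1 i) ⊗ₜ[ℂ] (1 : H) := by
      rw [TensorProduct.sum_tmul]
      exact Finset.sum_congr rfl fun i _ => (TensorProduct.smul_tmul' _ _ _).symm
    rw [h7, sum_smul_counit hz]
  rw [← h3, ← h2, h4]

lemma key_collapse2 {ι κ : Type} {z : H} {s : Finset ι} {z1 z2 : ι → H}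
    (hz : Rep2 z s z1 z2)
    (t : ι → Finset κ) (p q : ι → κ → H)
    (hp : ∀ i ∈ s, Rep2 (z2 i) (t i) (p i) (q i)) :
    ∑ i ∈ s, ∑ j ∈ t i, (HopfAlgebra.antipode (R := ℂ) (z1 i) * p i j) ⊗ₜ[ℂ] q i j
      = (1 : H) ⊗ₜ[ℂ] z := by
  set f : H ⊗[ℂ] H →ₗ[ℂ] H :=
    LinearMap.mul' ℂ H ∘ₗ LinearMap.rTensor H (HopfAlgebra.antipode (R := ℂ)) with hf
  set K : H ⊗[ℂ] (H ⊗[ℂ] H) →ₗ[ℂ] H ⊗[ℂ] H :=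
    LinearMap.rTensor H f ∘ₗ (TensorProduct.assoc ℂ H H H).symm.toLinearMap with hK
  have h1 : (Coalgebra.comul (R := ℂ) : H →ₗ[ℂ] H ⊗[ℂ] H).lTensor H
        (Coalgebra.comul (R := ℂ) z)
      = ∑ i ∈ s, ∑ j ∈ t i, z1 i ⊗ₜ[ℂ] (p i j ⊗ₜ[ℂ] q i j) := by
    rw [rep2_eq hz, map_sum]
    refine Finset.sum_congr rfl fun i hi => ?_
    rw [LinearMap.lTensor_tmul, rep2_eq (hp i hi), TensorProduct.tmul_sum]
  have h2 := congrArg K h1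
  have h3 : K (∑ i ∈ s, ∑ j ∈ t i, z1 i ⊗ₜ[ℂ] (p i j ⊗ₜ[ℂ] q i j))
      = ∑ i ∈ s, ∑ j ∈ t i,
          (HopfAlgebra.antipode (R := ℂ) (z1 i) * p i j) ⊗ₜ[ℂ] q i j := by
    rw [map_sum]
    refine Finset.sum_congr rfl fun i _ => ?_
    rw [map_sum]
    refine Finset.sum_congr rfl fun j _ => ?_
    simp [hK, hf, TensorProduct.assoc_symm_tmul]
  have h4 : K ((Coalgebra.comul (R := ℂ) : H →ₗ[ℂ] H ⊗[ℂ] H).lTensor H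
        (Coalgebra.comul (R := ℂ) z)) = (1 : H) ⊗ₜ[ℂ] z := by
    have hKc : K ((Coalgebra.comul (R := ℂ) : H →ₗ[ℂ] H ⊗[ℂ] H).lTensor H
          (Coalgebra.comul (R := ℂ) z))
        = LinearMap.rTensor H f
            ((Coalgebra.comul (R := ℂ) : H →ₗ[ℂ] H ⊗[ℂ] H).rTensor H
              (Coalgebra.comul (R := ℂ) z)) := by
      simp only [hK, LinearMap.comp_apply, LinearEquiv.coe_coe]
      rw [Coalgebra.coassoc_symm_apply]
    rw [hKc, rep2_eq hz, map_sum, map_sum]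
    have h5 : ∀ i ∈ s, LinearMap.rTensor H f
          ((Coalgebra.comul (R := ℂ) : H →ₗ[ℂ] H ⊗[ℂ] H).rTensor H (z1 i ⊗ₜ[ℂ] z2 i))
        = (Coalgebra.counit (R := ℂ) (z1 i)) • ((1 : H) ⊗ₜ[ℂ] z2 i) := by
      intro i _
      rw [LinearMap.rTensor_tmul, LinearMap.rTensor_tmul]
      have h6 : f (Coalgebra.comul (R := ℂ) (z1 i))
          = Coalgebra.counit (R := ℂ) (z1 i) • (1 : H) := by
        simp only [hf, LinearMap.comp_apply]
        rw [HopfAlgebra.mul_antipode_rTensor_comul_apply, Algebra.algebraMap_eq_smul_one]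
      rw [h6, TensorProduct.smul_tmul', TensorProduct.smul_tmul]
    rw [Finset.sum_congr rfl h5]
    have h7 : ∑ i ∈ s, (Coalgebra.counit (R := ℂ) (z1 i)) • ((1 : H) ⊗ₜ[ℂ] z2 i)
        = (1 : H) ⊗ₜ[ℂ] (∑ i ∈ s, (Coalgebra.counit (R := ℂ) (z1 i)) • z2 i) := by
      rw [TensorProduct.tmul_sum]
      exact Finset.sum_congr rfl fun i _ => (TensorProduct.tmul_smul _ _ _).symm
    rw [h7, sum_counit_smul hz]
  rw [← h3, ← h2, h4]


variable {A : Type} [Ring A] [HopfAlgebra ℂ A]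

lemma aux_hopf_trick
    (tri : H →ₗ[ℂ] A →ₗ[ℂ] A)
    (h1act : ∀ a : A, tri 1 a = a)
    (hmulact : ∀ (x y : H) (a : A), tri (x * y) a = tri x (tri y a))
    (hmul : ∀ (x : H) (a b : A) {ι : Type} (s : Finset ι) (x1 x2 : ι → H),
      Rep2 x s x1 x2 → tri x (a * b) = ∑ i ∈ s, tri (x1 i) a * tri (x2 i) b)
    (φA : A →ₗ[ℂ] ℂ)
    (hlin : ∀ (x : H) (a : A),
      φA (tri x a) = Coalgebra.counit (R := ℂ) x * φA a)
    (a b : A) {κ : Type} {g : H} {t : Finset κ} {p q : κ → H}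
    (hg : Rep2 g t p q) :
    φA (tri g a * b)
      = ∑ k ∈ t, Coalgebra.counit (R := ℂ) (p k) *
          φA (a * tri (HopfAlgebra.antipode (R := ℂ) (q k)) b) := by
  classical
  choose r hr using fun k : κ => rep2_exists (p k)
  have hkey : ∑ k ∈ t, ∑ w ∈ r k,
      w.1 ⊗ₜ[ℂ] (w.2 * HopfAlgebra.antipode (R := ℂ) (q k)) = g ⊗ₜ[ℂ] (1 : H) :=
    key_collapse hg r (fun k w => w.1) (fun k w => w.2) (fun k _ => hr k)
  set β : H ⊗[ℂ] H →ₗ[ℂ] ℂ :=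
    φA ∘ₗ LinearMap.mul' ℂ A ∘ₗ TensorProduct.map (tri.flip a) (tri.flip b) with hβ
  have hb := congrArg β hkey
  have hb1 : β (g ⊗ₜ[ℂ] (1 : H)) = φA (tri g a * b) := by
    simp only [hβ, LinearMap.comp_apply, TensorProduct.map_tmul, LinearMap.mul'_apply,
      LinearMap.flip_apply]
    rw [h1act]
  have hb2 : β (∑ k ∈ t, ∑ w ∈ r k,
        w.1 ⊗ₜ[ℂ] (w.2 * HopfAlgebra.antipode (R := ℂ) (q k)))
      = ∑ k ∈ t, ∑ w ∈ r k,
          φA (tri w.1 a * tri (w.2 * HopfAlgebra.antipode (R := ℂ) (q k)) b) := by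
    rw [map_sum]
    refine Finset.sum_congr rfl fun k _ => ?_
    rw [map_sum]
    refine Finset.sum_congr rfl fun w _ => ?_
    simp only [hβ, LinearMap.comp_apply, TensorProduct.map_tmul, LinearMap.mul'_apply,
      LinearMap.flip_apply]
  have hrhs : ∀ k ∈ t, Coalgebra.counit (R := ℂ) (p k) *
        φA (a * tri (HopfAlgebra.antipode (R := ℂ) (q k)) b)
      = ∑ w ∈ r k,
          φA (tri w.1 a * tri (w.2 * HopfAlgebra.antipode (R := ℂ) (q k)) b) := by
    intro k _
    rw [← hlin (p k) (a * tri (HopfAlgebra.antipode (R := ℂ) (q k)) b)]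
    rw [hmul (p k) a (tri (HopfAlgebra.antipode (R := ℂ) (q k)) b) (r k) _ _ (hr k), map_sum]
    exact Finset.sum_congr rfl fun w _ => by rw [← hmulact]
  rw [Finset.sum_congr rfl hrhs, ← hb2, hb, hb1]

lemma el1_pointwise
    (tri : H →ₗ[ℂ] A →ₗ[ℂ] A)
    (h1act : ∀ a : A, tri 1 a = a)
    (hmulact : ∀ (x y : H) (a : A), tri (x * y) a = tri x (tri y a))
    (hmul : ∀ (x : H) (a b : A) {ι : Type} (s : Finset ι) (x1 x2 : ι → H),
      Rep2 x s x1 x2 → tri x (a * b) = ∑ i ∈ s, tri (x1 i) a * tri (x2 i) b)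
    (φA : A →ₗ[ℂ] ℂ)
    (hAc : ∀ a b : A, φA (a * b) = φA (b * a))
    (hlin : ∀ (x : H) (a : A),
      φA (tri x a) = Coalgebra.counit (R := ℂ) x * φA a)
    (a b : A) (h : H) :
    φA (b * tri h a) = φA (a * tri (HopfAlgebra.antipode (R := ℂ) h) b) := by
  obtain ⟨t, hrep⟩ := rep2_exists h
  set lam : H →ₗ[ℂ] ℂ :=
    φA ∘ₗ LinearMap.mulLeft ℂ a ∘ₗ tri.flip b ∘ₗ HopfAlgebra.antipode (R := ℂ) with hlam
  have hlam_apply : ∀ h : H,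
      lam h = φA (a * tri (HopfAlgebra.antipode (R := ℂ) h) b) := fun _ => rfl
  have h1 : φA (b * tri h a) = φA (tri h a * b) := hAc _ _
  rw [h1, aux_hopf_trick tri h1act hmulact hmul φA hlin a b hrep]
  have h2 : ∀ k ∈ t, Coalgebra.counit (R := ℂ) (Prod.fst k) *
        φA (a * tri (HopfAlgebra.antipode (R := ℂ) (Prod.snd k)) b)
      = lam (Coalgebra.counit (R := ℂ) (Prod.fst k) • Prod.snd k) := by
    intro k _
    rw [map_smul, smul_eq_mul, hlam_apply]
  rw [Finset.sum_congr rfl h2, ← map_sum, sum_counit_smul hrep]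
  exact hlam_apply h

set_option maxRecDepth 8000 in
lemma el2 (φH : H →ₗ[ℂ] ℂ)
    (hint : ∀ (x : H) {ι : Type} (s : Finset ι) (x1 x2 : ι → H), Rep2 x s x1 x2 →
      ∑ i ∈ s, φH (x2 i) • x1 i = φH x • (1 : H))
    {x y : H} {ι κ : Type} {s : Finset ι} {t : Finset κ}
    {x1 x2 : ι → H} {y1 y2 : κ → H}
    (hx : Rep2 x s x1 x2) (hy : Rep2 y t y1 y2) :
    ∑ i ∈ s, φH (y * x2 i) • x1 i
      = ∑ j ∈ t, φH (y2 j * x) • HopfAlgebra.antipode (R := ℂ) (y1 j) := by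
  classical
  choose r hr using fun j : κ => rep2_exists (y2 j)
  have hkey : ∑ j ∈ t, ∑ w ∈ r j,
      (HopfAlgebra.antipode (R := ℂ) (y1 j) * w.1) ⊗ₜ[ℂ] w.2 = (1 : H) ⊗ₜ[ℂ] y :=
    key_collapse2 hy r (fun j w => w.1) (fun j w => w.2) (fun j _ => hr j)
  set Q : H ⊗[ℂ] H →ₗ[ℂ] H := TensorProduct.lift (LinearMap.mk₂ ℂ
    (fun u v => ∑ i ∈ s, φH (v * x2 i) • (u * x1 i))
    (by intro u u' v; simp [add_mul, smul_add, Finset.sum_add_distrib])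
    (by intro c u v
        rw [Finset.smul_sum]
        refine Finset.sum_congr rfl fun i _ => ?_
        rw [smul_mul_assoc, smul_smul, smul_smul, mul_comm])
    (by intro u v v'; simp [add_mul, add_smul, Finset.sum_add_distrib])
    (by intro c u v
        rw [Finset.smul_sum]
        refine Finset.sum_congr rfl fun i _ => ?_
        rw [smul_mul_assoc, map_smul, smul_eq_mul, mul_smul])) with hQ
  have hQt : ∀ u v : H, Q (u ⊗ₜ[ℂ] v) = ∑ i ∈ s, φH (v * x2 i) • (u * x1 i) := by
    intro u v; simp [hQ]
  have hq := congrArg Q hkey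
  have h1 : Q ((1 : H) ⊗ₜ[ℂ] y) = ∑ i ∈ s, φH (y * x2 i) • x1 i := by
    rw [hQt]; simp
  have h2 : Q (∑ j ∈ t, ∑ w ∈ r j,
        (HopfAlgebra.antipode (R := ℂ) (y1 j) * w.1) ⊗ₜ[ℂ] w.2)
      = ∑ j ∈ t, φH (y2 j * x) • HopfAlgebra.antipode (R := ℂ) (y1 j) := by
    rw [map_sum]
    refine Finset.sum_congr rfl fun j _ => ?_
    rw [map_sum]
    have h3 : ∀ w ∈ r j, Q ((HopfAlgebra.antipode (R := ℂ) (y1 j) * w.1) ⊗ₜ[ℂ] w.2)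
        = LinearMap.mulLeft ℂ (HopfAlgebra.antipode (R := ℂ) (y1 j))
            (∑ i ∈ s, φH (w.2 * x2 i) • (w.1 * x1 i)) := by
      intro w _
      rw [hQt]
      simp [Finset.mul_sum, mul_assoc, mul_smul_comm]
    rw [Finset.sum_congr rfl h3, ← map_sum]
    have h4 : ∑ w ∈ r j, ∑ i ∈ s, φH (w.2 * x2 i) • (w.1 * x1 i)
        = φH (y2 j * x) • (1 : H) := by
      have h5 := hint (y2 j * x) _ _ _ (rep2_mul (hr j) hx)
      rw [Finset.sum_product] at h5
      exact h5
    rw [h4]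
    simp [mul_smul_comm]
  rw [← h1, ← hq, h2]
end AuxBismash

/-- Let `(A, H, ▶, ρ)` be a linked pair of bialgebras where `A` and `H` are
cosemisimple with normal integrals `φ_A` and `φ_H`, and let `Φ(a # x) = φ_A(a) φ_H(x)` be
the corresponding normal integral on `A # H`.  Then `Φ` is central if and only if `φ_A` and
`φ_H` are central and `φ_A` is a morphism of `H`-modules
(`φ_A(x ▶ a) = ε(x) φ_A(a)`). -/
theorem bismash_integral_central_iff
    {A H : Type} [Ring A] [HopfAlgebra ℂ A] [Ring H] [HopfAlgebra ℂ H]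
    (tri : H →ₗ[ℂ] A →ₗ[ℂ] A) (rho : H →ₗ[ℂ] H ⊗[ℂ] A)
    (hlp : IsLinkedPair A H tri rho)
    (φA : A →ₗ[ℂ] ℂ) (hφA : IsNormalIntegral A φA)
    (φH : H →ₗ[ℂ] ℂ) (hφH : IsNormalIntegral H φH)
    (M : Type) [Ring M] [HopfAlgebra ℂ M] (e : A ⊗[ℂ] H ≃ₗ[ℂ] M)
    (hM : IsBismash A H tri rho M e) :
    (∀ m m' : M,
        ((LinearMap.mul' ℂ ℂ) ∘ₗ (TensorProduct.map φA φH) ∘ₗ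
          (e.symm : M →ₗ[ℂ] A ⊗[ℂ] H)) (m * m')
        = ((LinearMap.mul' ℂ ℂ) ∘ₗ (TensorProduct.map φA φH) ∘ₗ
          (e.symm : M →ₗ[ℂ] A ⊗[ℂ] H)) (m' * m))
      ↔ ((∀ a b : A, φA (a * b) = φA (b * a)) ∧
          (∀ x y : H, φH (x * y) = φH (y * x)) ∧
          (∀ (x : H) (a : A), φA (tri x a) = Coalgebra.counit (R := ℂ) x * φA a)) := by
  classical
  set Φ : M →ₗ[ℂ] ℂ := (LinearMap.mul' ℂ ℂ) ∘ₗ (TensorProduct.map φA φH) ∘ₗ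
      (e.symm : M →ₗ[ℂ] A ⊗[ℂ] H) with hΦdef
  have hΦ : ∀ (u : A) (v : H), Φ (e (u ⊗ₜ[ℂ] v)) = φA u * φH v := by
    intro u v
    simp only [hΦdef, LinearMap.comp_apply, LinearEquiv.coe_coe,
      LinearEquiv.symm_apply_apply, TensorProduct.map_tmul, LinearMap.mul'_apply]
  constructor
  · intro hc
    have hrep1 : Rep2 (1 : H) ({((1 : H), (1 : H))} : Finset (H × H))
        Prod.fst Prod.snd := by
      show Coalgebra.comul (R := ℂ) (1 : H) = _
      rw [Bialgebra.comul_one, Finset.sum_singleton]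
      exact Algebra.TensorProduct.one_def
    have hAc : ∀ a b : A, φA (a * b) = φA (b * a) := by
      intro a b
      have hab := hM.mul_def a b 1 1 _ Prod.fst Prod.snd hrep1
      have hba := hM.mul_def b a 1 1 _ Prod.fst Prod.snd hrep1
      have hcc := hc (e (a ⊗ₜ[ℂ] (1 : H))) (e (b ⊗ₜ[ℂ] (1 : H)))
      rw [hab, hba] at hcc
      simp only [Finset.sum_singleton] at hcc
      rw [hlp.tri_one_act, hlp.tri_one_act, one_mul] at hcc
      rw [hΦ, hΦ, hφH.1, mul_one, mul_one] at hcc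
      exact hcc
    have hφprod : ∀ (u v : H) {ι : Type} (su : Finset ι) (u1 u2 : ι → H),
        Rep2 u su u1 u2 →
        Φ (e ((1 : A) ⊗ₜ[ℂ] u) * e ((1 : A) ⊗ₜ[ℂ] v)) = φH (u * v) := by
      intro u v ι su u1 u2 hu
      rw [hM.mul_def 1 1 u v su u1 u2 hu, map_sum]
      have h1 : ∀ i ∈ su, Φ (e (((1 : A) * tri (u1 i) 1) ⊗ₜ[ℂ] (u2 i * v)))
          = Coalgebra.counit (R := ℂ) (u1 i) • φH (u2 i * v) := by
        intro i _
        rw [one_mul, hlp.tri_one, ← TensorProduct.smul_tmul', map_smul, map_smul,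
          hΦ, hφA.1, one_mul]
      rw [Finset.sum_congr rfl h1]
      have h2 := congrArg (φH ∘ₗ LinearMap.mulRight ℂ v) (sum_counit_smul hu)
      rw [map_sum] at h2
      simp only [LinearMap.comp_apply, LinearMap.mulRight_apply, map_smul] at h2
      exact h2
    have hHc : ∀ x y : H, φH (x * y) = φH (y * x) := by
      intro x y
      obtain ⟨sx, hx⟩ := rep2_exists x
      obtain ⟨sy, hy⟩ := rep2_exists y
      rw [← hφprod x y sx _ _ hx, ← hφprod y x sy _ _ hy]
      exact hc _ _
    refine ⟨hAc, hHc, ?_⟩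
    intro z a
    obtain ⟨sz, hz⟩ := rep2_exists z
    choose r hr using fun i : H × H => rep2_exists i.1
    have hB : ∀ i : H × H,
        Φ (e (a ⊗ₜ[ℂ] HopfAlgebra.antipode (R := ℂ) i.2) * e ((1 : A) ⊗ₜ[ℂ] i.1))
        = φA a * φH (HopfAlgebra.antipode (R := ℂ) i.2 * i.1) := by
      intro i
      obtain ⟨u, hu⟩ := rep2_exists (HopfAlgebra.antipode (R := ℂ) i.2)
      rw [hM.mul_def a 1 _ _ u Prod.fst Prod.snd hu, map_sum]
      have h1 : ∀ w ∈ u, Φ (e ((a * tri w.1 1) ⊗ₜ[ℂ] (w.2 * i.1)))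
          = Coalgebra.counit (R := ℂ) w.1 • (φA a * φH (w.2 * i.1)) := by
        intro w _
        rw [hlp.tri_one]
        have ha : a * (Coalgebra.counit (R := ℂ) w.1 • (1 : A))
            = Coalgebra.counit (R := ℂ) w.1 • a := by
          rw [mul_smul_comm, mul_one]
        rw [ha, ← TensorProduct.smul_tmul', map_smul, map_smul, hΦ]
      rw [Finset.sum_congr rfl h1]
      have h2 := congrArg (φH ∘ₗ LinearMap.mulRight ℂ i.1) (sum_counit_smul hu)
      rw [map_sum] at h2
      simp only [LinearMap.comp_apply, LinearMap.mulRight_apply, map_smul] at h2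
      calc ∑ w ∈ u, Coalgebra.counit (R := ℂ) w.1 • (φA a * φH (w.2 * i.1))
          = φA a * ∑ w ∈ u, Coalgebra.counit (R := ℂ) w.1 • φH (w.2 * i.1) := by
            rw [Finset.mul_sum]
            exact Finset.sum_congr rfl fun w _ => by
              simp only [smul_eq_mul]; ring
        _ = φA a * φH (HopfAlgebra.antipode (R := ℂ) i.2 * i.1) := by rw [h2]
    have hA : ∀ i ∈ sz, Φ (e ((1 : A) ⊗ₜ[ℂ] i.1)
          * e (a ⊗ₜ[ℂ] HopfAlgebra.antipode (R := ℂ) i.2))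
        = ∑ w ∈ r i, φA (tri w.1 a)
            * φH (w.2 * HopfAlgebra.antipode (R := ℂ) i.2) := by
      intro i _
      rw [hM.mul_def 1 a i.1 _ (r i) Prod.fst Prod.snd (hr i), map_sum]
      refine Finset.sum_congr rfl fun w _ => ?_
      rw [one_mul, hΦ]
    have hkey : ∑ i ∈ sz, ∑ w ∈ r i,
        w.1 ⊗ₜ[ℂ] (w.2 * HopfAlgebra.antipode (R := ℂ) i.2) = z ⊗ₜ[ℂ] (1 : H) :=
      key_collapse hz r (fun i w => w.1) (fun i w => w.2) (fun i _ => hr i)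
    set γ : H ⊗[ℂ] H →ₗ[ℂ] ℂ :=
      LinearMap.mul' ℂ ℂ ∘ₗ TensorProduct.map (φA ∘ₗ tri.flip a) φH with hγ
    have hg := congrArg γ hkey
    have hg1 : γ (z ⊗ₜ[ℂ] (1 : H)) = φA (tri z a) := by
      simp only [hγ, LinearMap.comp_apply, TensorProduct.map_tmul,
        LinearMap.mul'_apply, LinearMap.flip_apply]
      rw [hφH.1, mul_one]
    have hg2 : γ (∑ i ∈ sz, ∑ w ∈ r i,
          w.1 ⊗ₜ[ℂ] (w.2 * HopfAlgebra.antipode (R := ℂ) i.2))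
        = ∑ i ∈ sz, ∑ w ∈ r i, φA (tri w.1 a)
            * φH (w.2 * HopfAlgebra.antipode (R := ℂ) i.2) := by
      rw [map_sum]
      refine Finset.sum_congr rfl fun i _ => ?_
      rw [map_sum]
      refine Finset.sum_congr rfl fun w _ => ?_
      simp only [hγ, LinearMap.comp_apply, TensorProduct.map_tmul,
        LinearMap.mul'_apply, LinearMap.flip_apply]
    calc φA (tri z a) = γ (z ⊗ₜ[ℂ] (1 : H)) := hg1.symm
      _ = γ (∑ i ∈ sz, ∑ w ∈ r i,
            w.1 ⊗ₜ[ℂ] (w.2 * HopfAlgebra.antipode (R := ℂ) i.2)) := (hg).symm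
      _ = ∑ i ∈ sz, ∑ w ∈ r i, φA (tri w.1 a)
            * φH (w.2 * HopfAlgebra.antipode (R := ℂ) i.2) := hg2
      _ = ∑ i ∈ sz, Φ (e ((1 : A) ⊗ₜ[ℂ] i.1)
            * e (a ⊗ₜ[ℂ] HopfAlgebra.antipode (R := ℂ) i.2)) :=
          (Finset.sum_congr rfl hA).symm
      _ = ∑ i ∈ sz, Φ (e (a ⊗ₜ[ℂ] HopfAlgebra.antipode (R := ℂ) i.2)
            * e ((1 : A) ⊗ₜ[ℂ] i.1)) :=
          Finset.sum_congr rfl fun i _ => hc _ _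
      _ = ∑ i ∈ sz, φA a * φH (HopfAlgebra.antipode (R := ℂ) i.2 * i.1) :=
          Finset.sum_congr rfl fun i _ => hB i
      _ = φA a * φH (∑ i ∈ sz, i.1 * HopfAlgebra.antipode (R := ℂ) i.2) := by
          rw [map_sum, Finset.mul_sum]
          exact Finset.sum_congr rfl fun i _ => by rw [hHc]
      _ = Coalgebra.counit (R := ℂ) z * φA a := by
          rw [sum_mul_antipode hz, map_smul, smul_eq_mul, hφH.1, mul_one, mul_comm]
  · rintro ⟨hAc, hHc, hlin⟩
    have core : ∀ (a b : A) (x y : H),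
        Φ (e (a ⊗ₜ[ℂ] x) * e (b ⊗ₜ[ℂ] y)) = Φ (e (b ⊗ₜ[ℂ] y) * e (a ⊗ₜ[ℂ] x)) := by
      intro a b x y
      obtain ⟨sx, hx⟩ := rep2_exists x
      obtain ⟨sy, hy⟩ := rep2_exists y
      rw [hM.mul_def a b x y sx Prod.fst Prod.snd hx,
        hM.mul_def b a y x sy Prod.fst Prod.snd hy, map_sum, map_sum]
      have hL : ∀ i ∈ sx, Φ (e ((a * tri i.1 b) ⊗ₜ[ℂ] (i.2 * y)))
          = φA (a * tri i.1 b) * φH (i.2 * y) := fun i _ => hΦ _ _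
      have hR : ∀ j ∈ sy, Φ (e ((b * tri j.1 a) ⊗ₜ[ℂ] (j.2 * x)))
          = φA (b * tri j.1 a) * φH (j.2 * x) := fun j _ => hΦ _ _
      rw [Finset.sum_congr rfl hL, Finset.sum_congr rfl hR]
      have hR2 : ∀ j ∈ sy, φA (b * tri j.1 a) * φH (j.2 * x)
          = φA (a * tri (HopfAlgebra.antipode (R := ℂ) j.1) b) * φH (j.2 * x) := by
        intro j _
        rw [el1_pointwise tri hlp.tri_one_act hlp.tri_mul_act hlp.tri_mul φA hAc
          hlin a b j.1]
      rw [Finset.sum_congr rfl hR2]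
      set F : H →ₗ[ℂ] ℂ := φA ∘ₗ LinearMap.mulLeft ℂ a ∘ₗ tri.flip b with hFdef
      have hFa : ∀ h : H, F h = φA (a * tri h b) := fun _ => rfl
      have hF := congrArg F (el2 φH hφH.2.2 hx hy)
      rw [map_sum, map_sum] at hF
      simp only [map_smul] at hF
      calc ∑ i ∈ sx, φA (a * tri i.1 b) * φH (i.2 * y)
          = ∑ i ∈ sx, φH (y * i.2) • F i.1 := by
            refine Finset.sum_congr rfl fun i _ => ?_
            rw [hFa, hHc i.2 y, smul_eq_mul, mul_comm]
        _ = ∑ j ∈ sy, φH (j.2 * x) • F (HopfAlgebra.antipode (R := ℂ) j.1) := hF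
        _ = ∑ j ∈ sy, φA (a * tri (HopfAlgebra.antipode (R := ℂ) j.1) b)
              * φH (j.2 * x) := by
            refine Finset.sum_congr rfl fun j _ => ?_
            rw [hFa, smul_eq_mul, mul_comm]
    intro m m'
    obtain ⟨sm, hsm⟩ := TensorProduct.exists_finset (R := ℂ) (e.symm m)
    obtain ⟨sn, hsn⟩ := TensorProduct.exists_finset (R := ℂ) (e.symm m')
    have hm : m = ∑ w ∈ sm, e (w.1 ⊗ₜ[ℂ] w.2) := by
      rw [← map_sum, ← hsm, LinearEquiv.apply_symm_apply]
    have hn : m' = ∑ w ∈ sn, e (w.1 ⊗ₜ[ℂ] w.2) := by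
      rw [← map_sum, ← hsn, LinearEquiv.apply_symm_apply]
    rw [hm, hn, Finset.sum_mul_sum, Finset.sum_mul_sum]
    simp only [map_sum]
    rw [Finset.sum_comm]
    refine Finset.sum_congr rfl fun v _ => Finset.sum_congr rfl fun w _ => ?_
    exact core w.1 v.1 w.2 v.2
end
end
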